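/- arXiv:2002.10611 — 2 statements merged into one kernel-verified Lean document; each statement's English description precedes it below -/
import Mathlib

section
/- Let x be real with 1 ≤ x < 2, and suppose c is real with c ≤ 1 and c ≤ x² − 2. Then there exists y_c ≥ max(2, x²−1) such that λ(x, y_c) = c and α(x, y_c) < 0, where λ(x,y) = 9x² − 12x⁴ + 4x⁶ − 5y + 10x²y + 2x⁴y − 4x⁶y − 11x²y² + 8x⁴y² + x⁶y² + 5y³ − 4x²y³ − 3x⁴y³ + 3x²y⁴ − y⁵ and α(x,y) = 1 − 4x² + 2x⁴ + 2y − x²y − x⁴y − y² + 2x²y² − y³. -/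
noncomputable def lam (x y : ℝ) : ℝ :=
  9 * x ^ 2 - 12 * x ^ 4 + 4 * x ^ 6 - 5 * y + 10 * x ^ 2 * y + 2 * x ^ 4 * y - 4 * x ^ 6 * y -
    11 * x ^ 2 * y ^ 2 + 8 * x ^ 4 * y ^ 2 + x ^ 6 * y ^ 2 + 5 * y ^ 3 - 4 * x ^ 2 * y ^ 3 -
    3 * x ^ 4 * y ^ 3 + 3 * x ^ 2 * y ^ 4 - y ^ 5

noncomputable def alpha (x y : ℝ) : ℝ :=
  1 - 4 * x ^ 2 + 2 * x ^ 4 + 2 * y - x ^ 2 * y - x ^ 4 * y - y ^ 2 + 2 * x ^ 2 * y ^ 2 - y ^ 3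

lemma alpha_neg (x y : ℝ) (hx1 : 1 ≤ x) (hx2 : x < 2) (hy2 : 2 ≤ y)
    (hy : x ^ 2 - 1 ≤ y) : alpha x y < 0 := by
  have ht : 0 ≤ y - (x ^ 2 - 1) := by linarith
  have hx : 1 ≤ x ^ 2 := by nlinarith
  have key : alpha x y = -1 + (1 - x ^ 2) * (y - (x ^ 2 - 1)) +
      (2 - x ^ 2) * (y - (x ^ 2 - 1)) ^ 2 - (y - (x ^ 2 - 1)) ^ 3 := by
    unfold alpha; ring
  set t := y - (x ^ 2 - 1) with htdef
  have h1 : (1 - x ^ 2) * t ≤ 0 := mul_nonpos_of_nonpos_of_nonneg (by linarith) ht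
  have h2 : (2 - x ^ 2) * t ^ 2 - t ^ 3 ≤ 4 / 27 := by
    nlinarith [sq_nonneg (3 * t - 2 * (2 - x ^ 2)), mul_nonneg ht (sq_nonneg (3 * t - 2 * (2 - x ^ 2))), sq_nonneg t, sq_nonneg (2 - x ^ 2)]
  rw [key]; nlinarith [h1, h2]

lemma lam_big (x y : ℝ) (hx1 : 1 ≤ x) (hx2 : x < 2) (hy : (100 : ℝ) ≤ y) :
    lam x y ≤ 2 - y := by
  have hx4 : x ^ 2 ≤ 4 := by nlinarith
  have hx16 : x ^ 4 ≤ 16 := by nlinarith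
  have hx64 : x ^ 6 ≤ 64 := by nlinarith
  have hx0 : (0:ℝ) ≤ x ^ 2 := sq_nonneg x
  have hx0' : (0:ℝ) ≤ x ^ 4 := by positivity
  have hx0'' : (0:ℝ) ≤ x ^ 6 := by positivity
  have hy0 : (0:ℝ) < y := by linarith
  unfold lam
  nlinarith [pow_le_pow_left₀ (by norm_num : (0:ℝ) ≤ 100) hy 5,
    mul_le_mul_of_nonneg_right hx4 (pow_nonneg hy0.le 4),
    mul_le_mul_of_nonneg_right hx16 (pow_nonneg hy0.le 2),
    mul_le_mul_of_nonneg_right hx64 (pow_nonneg hy0.le 2),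
    mul_le_mul_of_nonneg_right hx4 hy0.le,
    mul_le_mul_of_nonneg_right hx16 hy0.le,
    pow_le_pow_right₀ (by linarith : (1:ℝ) ≤ y) (by norm_num : 1 ≤ 5),
    pow_le_pow_right₀ (by linarith : (1:ℝ) ≤ y) (by norm_num : 2 ≤ 5),
    pow_le_pow_right₀ (by linarith : (1:ℝ) ≤ y) (by norm_num : 3 ≤ 5),
    pow_le_pow_right₀ (by linarith : (1:ℝ) ≤ y) (by norm_num : 4 ≤ 5),
    mul_nonneg hx0'' (sq_nonneg y), mul_nonneg hx0 (pow_nonneg hy0.le 3)]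

theorem lam_hits_c_with_alpha_neg (x : ℝ) (hx1 : 1 ≤ x) (hx2 : x < 2)
    (c : ℝ) (hc1 : c ≤ 1) (hc2 : c ≤ x ^ 2 - 2) :
    ∃ y : ℝ, max 2 (x ^ 2 - 1) ≤ y ∧ lam x y = c ∧ alpha x y < 0 := by
  set a := max 2 (x ^ 2 - 1) with ha
  set b := max 100 (max a (2 - c)) with hb
  have hab : a ≤ b := le_trans (le_max_left _ _) (le_max_right _ _)
  have hcont : ContinuousOn (fun y => lam x y) (Set.Icc a b) := by
    apply Continuous.continuousOn; unfold lam; continuity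
  have hfa : c ≤ lam x a := by
    rcases le_total (x ^ 2 - 1) 2 with h | h
    · have : a = 2 := max_eq_left h
      rw [this]
      have : lam x 2 = x ^ 2 - 2 := by unfold lam; ring
      linarith [this ▸ hc2]
    · have : a = x ^ 2 - 1 := max_eq_right h
      rw [this]
      have : lam x (x ^ 2 - 1) = 1 := by unfold lam; ring
      linarith [this ▸ hc1]
  have hfb : lam x b ≤ c := by
    have h100 : (100 : ℝ) ≤ b := le_max_left _ _
    have h2c : 2 - c ≤ b := le_trans (le_max_right _ _) (le_max_right _ _)
    have := lam_big x b hx1 hx2 h100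
    linarith
  have hmem : c ∈ Set.Icc (lam x b) (lam x a) := ⟨hfb, hfa⟩
  obtain ⟨y, hy, hfy⟩ := intermediate_value_Icc' hab hcont hmem
  refine ⟨y, hy.1, hfy, ?_⟩
  have hy2 : 2 ≤ y := le_trans (le_max_left _ _) hy.1
  have hyx : x ^ 2 - 1 ≤ y := le_trans (le_max_right _ _) hy.1
  exact alpha_neg x y hx1 hx2 hy2 hyx
end

section
/- Let φ(x,y) = λ(x,y)·α(x,y) − β(x,y), with λ(x,y) = 9x² − 12x⁴ + 4x⁶ − 5y + 10x²y + 2x⁴y − 4x⁶y − 11x²y² + 8x⁴y² + x⁶y² + 5y³ − 4x²y³ − 3x⁴y³ + 3x²y⁴ − y⁵, α(x,y) = 1 − 4x² + 2x⁴ + 2y − x²y − x⁴y − y² + 2x²y² − y³, and β(x,y) = −1 + x² − y. Then for every integer n ≥ 6, writing x_n = 2cos(π/n), the function y ↦ φ(x_n, y) has a real root y_n > 2. -/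
noncomputable def beta (x y : ℝ) : ℝ := -1 + x ^ 2 - y

lemma phi_at (x : ℝ) : lam x (x ^ 2 - 1) * alpha x (x ^ 2 - 1) - beta x (x ^ 2 - 1) = -1 := by
  simp only [lam, alpha, beta]; ring

lemma phi_big (x : ℝ) (hx : x ^ 2 ≤ 4) :
    0 < lam x 100 * alpha x 100 - beta x 100 := by
  have h0 : (0:ℝ) ≤ x ^ 2 := sq_nonneg x
  simp only [lam, alpha, beta]
  nlinarith [pow_le_pow_left₀ h0 hx 1, pow_le_pow_left₀ h0 hx 2, pow_le_pow_left₀ h0 hx 3,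
    mul_nonneg h0 h0, mul_nonneg (mul_nonneg h0 h0) h0]

theorem riley_root_K2 (n : ℕ) (hn : 6 ≤ n) :
    ∃ y : ℝ, 2 < y ∧
      lam (2 * Real.cos (Real.pi / n)) y * alpha (2 * Real.cos (Real.pi / n)) y -
        beta (2 * Real.cos (Real.pi / n)) y = 0 := by
  set x : ℝ := 2 * Real.cos (Real.pi / n) with hxdef
  have hn0 : (0:ℝ) < n := by positivity
  have hcos1 : Real.cos (Real.pi / n) ≤ 1 := Real.cos_le_one _
  have hx4 : x ^ 2 ≤ 4 := by
    have := Real.neg_one_le_cos (Real.pi / n)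
    nlinarith
  -- lower bound: π/n ≤ π/6, cos is ≥ cos(π/6) = √3/2
  have hle : Real.pi / n ≤ Real.pi / 6 := by
    apply div_le_div_of_nonneg_left Real.pi_pos.le (by norm_num)
    exact_mod_cast hn
  have hge0 : 0 ≤ Real.pi / n := by positivity
  have hcos : Real.cos (Real.pi / 6) ≤ Real.cos (Real.pi / n) := by
    apply Real.cos_le_cos_of_nonneg_of_le_pi hge0 _ hle
    linarith [Real.pi_pos]
  rw [Real.cos_pi_div_six] at hcos
  have hsqrt3 : Real.sqrt 3 ≤ x := by rw [hxdef]; linarith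
  have hx3 : 3 ≤ x ^ 2 := by
    have h3 : (0:ℝ) ≤ 3 := by norm_num
    calc (3:ℝ) = Real.sqrt 3 ^ 2 := by rw [Real.sq_sqrt h3]
    _ ≤ x ^ 2 := by
        apply pow_le_pow_left₀ (Real.sqrt_nonneg 3) hsqrt3
  set a : ℝ := x ^ 2 - 1 with ha
  have ha2 : 2 ≤ a := by simp [ha]; linarith
  have hab : a ≤ 100 := by simp [ha]; linarith
  have hcont : ContinuousOn (fun y => lam x y * alpha x y - beta x y) (Set.Icc a 100) := by
    apply Continuous.continuousOn
    simp only [lam, alpha, beta]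
    fun_prop
  have hneg : lam x a * alpha x a - beta x a = -1 := phi_at x
  have hpos : 0 < lam x 100 * alpha x 100 - beta x 100 := phi_big x hx4
  have := intermediate_value_Icc hab hcont
  have h0mem : (0:ℝ) ∈ Set.Icc (lam x a * alpha x a - beta x a)
      (lam x 100 * alpha x 100 - beta x 100) := by
    constructor <;> simp [hneg] <;> linarith
  obtain ⟨y, hy, hyval⟩ := this h0mem
  have hyval' : lam x y * alpha x y - beta x y = 0 := hyval
  refine ⟨y, ?_, hyval'⟩
  rcases eq_or_lt_of_le hy.1 with h | h
  · exfalso; rw [← h] at hyval'; rw [hyval'] at hneg; norm_num at hneg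
  · linarith
end
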